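/- Let n ≥ 1, h = 1/n, and consider the uniform 1D mesh of [0,1] with cells K_i = (ih,(i+1)h) and centers x_i = (i+1/2)h for i = 0,…,n−1. Let u_0,…,u_{n−1}, v_0,…,v_{n−1} ∈ ℝ be cell values, u_∂₀, u_∂₁, v_∂₀, v_∂₁ ∈ ℝ boundary face values, and define interior face values u_{i+1/2} = (u_i+u_{i+1})/2 for 0 ≤ i ≤ n−2 (similarly for v). For cell i with left face value w_l(i) (equal to u_{i−1/2} if i ≥ 1 and to u_∂₀ if i = 0) and right face value w_r(i) (equal to u_{i+1/2} if i ≤ n−2 and to u_∂₁ if i = n−1), set ∇_i u = (w_r(i) − w_l(i))/h, R_{i,±} = (2/h)(w_{r/l}(i) − u_i − ∇_i u · (±h/2)), and ∇_{i,±} u = ∇_i u + R_{i,±}·(±1). Then the stabilized discrete Dirichlet form satisfies the two-point reduction: ∑_{i=0}^{n−1} (h/2)( ∇_{i,+}u·∇_{i,+}v + ∇_{i,−}u·∇_{i,−}v ) = ∑_{i=0}^{n−2} (u_{i+1} − u_i)(v_{i+1} − v_i)/h + (2/h)(u_0 − u_∂₀)(v_0 − v_∂₀) + (2/h)(u_{n−1}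 − u_∂₁)(v_{n−1} − v_∂₁). -/

import Mathlib

/-- Left face value of cell `i` on the uniform 1D mesh with `n` cells:
boundary value `ub0` if `i = 0`, arithmetic mean of the two adjacent cell
values otherwise. -/
noncomputable def faceL (u : ℕ → ℝ) (ub0 : ℝ) (i : ℕ) : ℝ :=
  if i = 0 then ub0 else (u (i - 1) + u i) / 2

/-- Right face value of cell `i` on the uniform 1D mesh with `n` cells. -/
noncomputable def faceR (n : ℕ) (u : ℕ → ℝ) (ub1 : ℝ) (i : ℕ) : ℝ :=
  if i = n - 1 then ub1 else (u i + u (i + 1)) / 2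

/-- Centered discrete gradient of cell `i` (1D). -/
noncomputable def grad1 (n : ℕ) (h : ℝ) (u : ℕ → ℝ) (ub0 ub1 : ℝ) (i : ℕ) : ℝ :=
  (faceR n u ub1 i - faceL u ub0 i) / h

/-- Residual at the right face of cell `i` (1D, `√d = 1`, `d_{K,σ} = h/2`). -/
noncomputable def resP (n : ℕ) (h : ℝ) (u : ℕ → ℝ) (ub0 ub1 : ℝ) (i : ℕ) : ℝ :=
  (2 / h) * (faceR n u ub1 i - u i - grad1 n h u ub0 ub1 i * (h / 2))

/-- Residual at the left face of cell `i` (1D). -/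
noncomputable def resM (n : ℕ) (h : ℝ) (u : ℕ → ℝ) (ub0 ub1 : ℝ) (i : ℕ) : ℝ :=
  (2 / h) * (faceL u ub0 i - u i - grad1 n h u ub0 ub1 i * (-(h / 2)))

/-- Stabilized gradient on the right half-cell: `∇_i u + R_{i,+}·(+1)`. -/
noncomputable def stabP (n : ℕ) (h : ℝ) (u : ℕ → ℝ) (ub0 ub1 : ℝ) (i : ℕ) : ℝ :=
  grad1 n h u ub0 ub1 i + resP n h u ub0 ub1 i * 1

/-- Stabilized gradient on the left half-cell: `∇_i u + R_{i,−}·(−1)`. -/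
noncomputable def stabM (n : ℕ) (h : ℝ) (u : ℕ → ℝ) (ub0 ub1 : ℝ) (i : ℕ) : ℝ :=
  grad1 n h u ub0 ub1 i + resM n h u ub0 ub1 i * (-1)

/-! The residual exactly cancels the centered gradient on each half-cell: the stabilized gradient
on the cone between the center `x_i` and a face is the difference quotient of the face value and
the cell value over `d_{K,σ} = h/2`. Pairing the right half of cell `i` with the left half of
cell `i + 1`, which share the face value `(u_i + u_{i+1})/2`, gives the two-point flux
`(u_{i+1} - u_i)(v_{i+1} - v_i)/h`; the two outermost half-cells give the boundary terms. -/

section FaceValues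

variable (n : ℕ) (w : ℕ → ℝ) (wb0 wb1 : ℝ)

lemma faceL_zero : faceL w wb0 0 = wb0 := if_pos rfl

lemma faceL_succ (i : ℕ) : faceL w wb0 (i + 1) = (w i + w (i + 1)) / 2 := by
  simp [faceL]

lemma faceR_last (m : ℕ) : faceR (m + 1) w wb1 m = wb1 := if_pos rfl

lemma faceR_of_lt {i : ℕ} (hi : i < n - 1) : faceR n w wb1 i = (w i + w (i + 1)) / 2 :=
  if_neg hi.ne

end FaceValues

section StabilizedGradient

variable (n : ℕ) {h : ℝ} (hh : h ≠ 0) (w : ℕ → ℝ) (wb0 wb1 : ℝ) (i : ℕ)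
include hh

lemma stabP_eq : stabP n h w wb0 wb1 i = 2 / h * (faceR n w wb1 i - w i) := by
  simp only [stabP, resP, grad1]
  field_simp
  ring

lemma stabM_eq : stabM n h w wb0 wb1 i = 2 / h * (w i - faceL w wb0 i) := by
  simp only [stabM, resM, grad1]
  field_simp
  ring

lemma halfCells_eq (u v : ℕ → ℝ) (ub0 ub1 vb0 vb1 : ℝ) :
    (h / 2) * (stabP n h u ub0 ub1 i * stabP n h v vb0 vb1 i +
        stabM n h u ub0 ub1 i * stabM n h v vb0 vb1 i)
      = 2 / h * ((faceR n u ub1 i - u i) * (faceR n v vb1 i - v i))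
        + 2 / h * ((u i - faceL u ub0 i) * (v i - faceL v vb0 i)) := by
  rw [stabP_eq n hh, stabP_eq n hh, stabM_eq n hh, stabM_eq n hh]
  field_simp

end StabilizedGradient

lemma twoPoint_flux_eq (h a b c d : ℝ) :
    2 / h * (((a + b) / 2 - a) * ((c + d) / 2 - c)) + 2 / h * ((b - (a + b) / 2) * (d - (c + d) / 2))
      = (b - a) * (d - c) / h := by
  ring

open Finset in
lemma sum_range_succ_add_eq_sum_add_shift {M : Type*} [AddCommMonoid M] (f g : ℕ → M) (m : ℕ) :
    ∑ i ∈ range (m + 1), (f i + g i) = ∑ i ∈ range m, (f i + g (i + 1)) + g 0 + f m := by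
  rw [sum_add_distrib, sum_range_succ, sum_range_succ' g, sum_add_distrib]
  abel

open Finset in
/-- on the uniform 1D mesh of `[0,1]` with `n` cells, the
stabilized discrete Dirichlet form reduces to the classical two-point flux
scheme. -/
theorem stmt6 (n : ℕ) (hn : 1 ≤ n) (h : ℝ) (hh : h = 1 / n)
    (u v : ℕ → ℝ) (ub0 ub1 vb0 vb1 : ℝ) :
    ∑ i ∈ range n, (h / 2) *
        (stabP n h u ub0 ub1 i * stabP n h v vb0 vb1 i +
         stabM n h u ub0 ub1 i * stabM n h v vb0 vb1 i)
      = ∑ i ∈ range (n - 1), (u (i + 1) - u i) * (v (i + 1) - v i) / h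
        + (2 / h) * (u 0 - ub0) * (v 0 - vb0)
        + (2 / h) * (u (n - 1) - ub1) * (v (n - 1) - vb1) := by
  obtain ⟨m, rfl⟩ : ∃ m, n = m + 1 := Nat.exists_eq_add_of_le' hn
  have hh0 : h ≠ 0 := by rw [hh]; positivity
  simp only [halfCells_eq (m + 1) hh0, Nat.add_sub_cancel]
  rw [sum_range_succ_add_eq_sum_add_shift]
  have interior : ∀ i ∈ range m,
      2 / h * ((faceR (m + 1) u ub1 i - u i) * (faceR (m + 1) v vb1 i - v i))
        + 2 / h * ((u (i + 1) - faceL u ub0 (i + 1)) * (v (i + 1) - faceL v vb0 (i + 1)))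
      = (u (i + 1) - u i) * (v (i + 1) - v i) / h := by
    intro i hi
    have hi' : i < m + 1 - 1 := by simpa using hi
    rw [faceR_of_lt _ _ _ hi', faceR_of_lt _ _ _ hi', faceL_succ, faceL_succ, twoPoint_flux_eq]
  rw [sum_congr rfl interior, faceL_zero, faceL_zero, faceR_last, faceR_last]
  ring
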